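/- Let $M\ge1$ and let $\beta>1$ satisfy $\beta^{M+1}=\beta^M+1$. Then the quasi-greedy expansion of $1$ in base $\beta$ is $(1\,0^M)^\infty$ and $c_\beta=\frac{1}{M+1}$. -/

import Mathlib

open scoped BigOperators
open Filter

/-- The beta-map `τ_β(x) = βx - ⌊βx⌋`. -/
noncomputable def tauβ (β x : ℝ) : ℝ := β * x - ⌊β * x⌋

/-- The greedy digits: `gdigit β x n = ⌊β τ_β^n(x)⌋` (0-indexed; `gdigit β x (n-1) = g_n(x)`). -/
noncomputable def gdigit (β x : ℝ) (n : ℕ) : ℤ := ⌊β * (tauβ β)^[n] x⌋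

/-- `x` is simple if some iterate of the beta-map hits `1/β`. -/
def isSimple (β x : ℝ) : Prop := ∃ n : ℕ, (tauβ β)^[n] x = 1 / β

open Classical in
/-- The quasi-greedy expansion of `1` (0-indexed): if `1` is simple with minimal `m` such that
`τ_β^[m] 1 = 1/β` (so `S(1) = m+1`), it is the periodic repetition of the word
`g_1(1) … g_{S-1}(1) (g_S(1) - 1)`; otherwise it is the greedy expansion of `1`. -/
noncomputable def qone (β : ℝ) : ℕ → ℤ :=
  if h : ∃ m : ℕ, (tauβ β)^[m] (1 : ℝ) = 1 / β then
    fun n =>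
      if n % (Nat.find h + 1) = Nat.find h then gdigit β 1 (Nat.find h) - 1
      else gdigit β 1 (n % (Nat.find h + 1))
  else gdigit β 1

/-- Lexicographic order `a ⪯ b` on sequences. -/
def lexLe (a b : ℕ → ℤ) : Prop :=
  a = b ∨ ∃ m : ℕ, (∀ i, i < m → a i = b i) ∧ a m < b m

/-- The left shift. -/
def shiftSeq (u : ℕ → ℤ) : ℕ → ℤ := fun n => u (n + 1)

/-- The beta-shift: the closure (in the product topology) of the set of greedy digit
sequences of non-simple points of `[0,1]`. -/
def Xbeta (β : ℝ) : Set (ℕ → ℤ) :=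
  closure {u | ∃ x : ℝ, x ∈ Set.Icc (0:ℝ) 1 ∧ ¬ isSimple β x ∧ u = gdigit β x}

/-- `Hfun q t n = exp (t * (q 0 + ⋯ + q (n-1)))`. -/
noncomputable def Hfun (q : ℕ → ℤ) (t : ℝ) (n : ℕ) : ℝ :=
  Real.exp (t * ∑ i ∈ Finset.range n, (q i : ℝ))

/-- The power series `φ_t(z) = ∑_{n ≥ 1} q_n H_{n-1}(t) z^n` (real variable). -/
noncomputable def phiR (q : ℕ → ℤ) (t z : ℝ) : ℝ :=
  ∑' n : ℕ, (q n : ℝ) * Hfun q t n * z ^ (n + 1)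

/-- The power series `φ_t(z)` (complex variable). -/
noncomputable def phiC (q : ℕ → ℤ) (t : ℝ) (z : ℂ) : ℂ :=
  ∑' n : ℕ, ((q n : ℝ) : ℂ) * ((Hfun q t n : ℝ) : ℂ) * z ^ (n + 1)

/-- `r_t = limsup_n ( sup_{x ∈ X_β} e^{t Σ_{i<n} x_i} )^{1/n}`. -/
noncomputable def rT (β t : ℝ) : ℝ :=
  Filter.atTop.limsup fun n : ℕ =>
    (⨆ u : Xbeta β, Real.exp (t * ∑ i ∈ Finset.range n, ((u : ℕ → ℤ) i : ℝ))) ^ ((1:ℝ) / n)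

/-- The lexicographic interval `[0̲, a]` in `X_β`. -/
def Ival (β : ℝ) (a : ℕ → ℤ) : Set (ℕ → ℤ) := {u ∈ Xbeta β | lexLe u a}

/-- Prepend a digit to a sequence. -/
def consSeq (a : ℤ) (u : ℕ → ℤ) : ℕ → ℤ := fun n => if n = 0 then a else u (n - 1)

open Classical in
/-- The transfer operator with potential `t·χ_{C_1}`:
`(𝓛_t f)(x) = Σ_{σ y = x, y ∈ X_β} e^{t χ_{C_1}(y)} f(y)`. -/
noncomputable def Lop (β t : ℝ) (f : (ℕ → ℤ) → ℝ) (u : ℕ → ℤ) : ℝ :=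
  (if consSeq 0 u ∈ Xbeta β then f (consSeq 0 u) else 0)
    + Real.exp t * (if consSeq 1 u ∈ Xbeta β then f (consSeq 1 u) else 0)

open Classical in
/-- The transfer operator (acting on complex-valued functions). -/
noncomputable def LopC (β t : ℝ) (f : (ℕ → ℤ) → ℂ) (u : ℕ → ℤ) : ℂ :=
  (if consSeq 0 u ∈ Xbeta β then f (consSeq 0 u) else 0)
    + Real.exp t * (if consSeq 1 u ∈ Xbeta β then f (consSeq 1 u) else 0)

open MeasureTheory in
/-- `c_β = sup_{μ ∈ M(X_β)} μ(C_1)`, the supremum of the measure of the cylinder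
`C_1 = {x_1 = 1}` over all shift-invariant Borel probability measures on `X_β`. -/
noncomputable def cbeta (β : ℝ) : ℝ :=
  sSup {r : ℝ | ∃ μ : Measure (ℕ → ℤ), IsProbabilityMeasure μ ∧
    μ (Xbeta β) = 1 ∧ μ.map shiftSeq = μ ∧ r = (μ {u | u 0 = 1}).toReal}

/-!
Put `T = τ_β`. The defining equation says `β^M (β - 1) = 1`, so `T^{j+1} 1 = β^j (β - 1)` for
`j < M` and `T^M 1 = 1/β`: the greedy digits of `1` are `1 0^{M-1} 1`, and `1` has quasi-greedy
expansion `(1 0^M)^∞`. The same identity shows that after a greedy digit `1` at a point `z < 1`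
the next `M` digits vanish (`z = 1` would make the point simple), so in `X_β` two `1`s are at
distance `> M`. For an invariant probability measure the cylinders `{x_k = 1}`, `k ≤ M`, all have
mass `μ(C_1)` and are disjoint on `X_β`, whence `(M + 1) μ(C_1) ≤ 1`. Conversely, iterating the
inverse branch of `T^{M+1}` that prepends the block `1 0^M`, starting from a non-simple point
(simple points are countable), gives non-simple points whose expansions agree with `(1 0^M)^∞` on
ever longer prefixes. Hence this periodic sequence lies in `X_β`, and the uniform measure on its
orbit has `μ(C_1) = 1/(M+1)`.
-/

open Set MeasureTheory
open scoped ENNReal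

section BetaMap

variable {β x : ℝ}

lemma tauβ_of_lt_one (h₀ : 0 ≤ β * x) (h₁ : β * x < 1) : tauβ β x = β * x := by
  rw [tauβ, Int.floor_eq_zero_iff.2 ⟨h₀, h₁⟩, Int.cast_zero, sub_zero]

lemma tauβ_of_one_le (h₁ : 1 ≤ β * x) (h₂ : β * x < 2) : tauβ β x = β * x - 1 := by
  have : ⌊β * x⌋ = 1 := Int.floor_eq_iff.2 ⟨by exact_mod_cast h₁, by norm_num; linarith⟩
  rw [tauβ, this, Int.cast_one]

lemma iterate_tauβ_mem_Icc (hx : x ∈ Icc 0 1) : ∀ n, (tauβ β)^[n] x ∈ Icc 0 1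
  | 0 => hx
  | n + 1 => by
    rw [Function.iterate_succ_apply']
    exact ⟨Int.fract_nonneg _, (Int.fract_lt_one _).le⟩

lemma gdigit_add (x : ℝ) (a n : ℕ) : gdigit β x (a + n) = gdigit β ((tauβ β)^[a] x) n := by
  rw [gdigit, gdigit, add_comm, Function.iterate_add_apply]

lemma shiftSeq_gdigit (x : ℝ) : shiftSeq (gdigit β x) = gdigit β (tauβ β x) :=
  funext fun n => by rw [shiftSeq, add_comm, gdigit_add, Function.iterate_one]

lemma gdigit_eq_one_of_iterate_eq (hβ : β ≠ 0) {n : ℕ} (h : (tauβ β)^[n] x = 1 / β) :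
    gdigit β x n = 1 := by
  rw [gdigit, h, mul_one_div_cancel hβ, Int.floor_one]

lemma not_isSimple_of_iterate {n : ℕ} (hn : ¬ isSimple β ((tauβ β)^[n] x))
    (h : ∀ j < n, (tauβ β)^[j] x ≠ 1 / β) : ¬ isSimple β x := by
  rintro ⟨m, hm⟩
  rcases lt_or_ge m n with hmn | hmn
  · exact h m hmn hm
  · obtain ⟨k, rfl⟩ := Nat.exists_eq_add_of_le hmn
    exact hn ⟨k, by rwa [add_comm, Function.iterate_add_apply] at hm⟩

lemma not_isSimple_tauβ (hx : ¬ isSimple β x) : ¬ isSimple β (tauβ β x) :=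
  fun ⟨n, hn⟩ => hx ⟨n + 1, by rwa [Function.iterate_succ_apply]⟩

lemma countable_setOf_isSimple (hβ : β ≠ 0) : {x | isSimple β x}.Countable := by
  have hfiber : ∀ s : Set ℝ, s.Countable → (tauβ β ⁻¹' s).Countable := fun s hs => by
    refine ((hs.prod (countable_univ (α := ℤ))).image fun p => (p.1 + p.2) / β).mono ?_
    intro y hy
    refine ⟨(tauβ β y, ⌊β * y⌋), ⟨hy, trivial⟩, ?_⟩
    field_simp
    rw [tauβ]
    ring
  have hiter : ∀ n, ((tauβ β)^[n] ⁻¹' {1 / β}).Countable := fun n => by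
    induction n with
    | zero => exact countable_singleton _
    | succ n ih => rw [Function.iterate_succ, Set.preimage_comp]; exact hfiber _ ih
  convert countable_iUnion hiter using 1
  ext y
  simp [isSimple]

lemma exists_not_isSimple (hβ : β ≠ 0) : ∃ y ∈ Ioo (0 : ℝ) 1, ¬ isSimple β y := by
  by_contra! h
  exact absurd ((countable_setOf_isSimple hβ).mono h) (by simp)

lemma mapsTo_shiftSeq_Xbeta : MapsTo shiftSeq (Xbeta β) (Xbeta β) := by
  refine MapsTo.closure ?_ (continuous_pi fun n => continuous_apply (n + 1))
  rintro _ ⟨x, hx, hns, rfl⟩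
  exact ⟨tauβ β x, iterate_tauβ_mem_Icc hx 1, not_isSimple_tauβ hns, shiftSeq_gdigit x⟩

end BetaMap

section Block

variable {β x : ℝ} {n : ℕ} (hβ : 1 ≤ β) (hx : 1 ≤ β * x) (hn : β ^ n * (β * x - 1) < 1)
include hβ hx hn

lemma pow_mul_sub_one_lt_one {j : ℕ} (hj : j ≤ n) : β ^ j * (β * x - 1) < 1 :=
  (mul_le_mul_of_nonneg_right (pow_le_pow_right₀ hβ hj) (by linarith)).trans_lt hn

lemma iterate_tauβ_succ {j : ℕ} (hj : j ≤ n) :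
    (tauβ β)^[j + 1] x = β ^ j * (β * x - 1) := by
  induction j with
  | zero =>
    have := pow_mul_sub_one_lt_one hβ hx hn (Nat.zero_le n)
    rw [pow_zero, one_mul] at this ⊢
    exact tauβ_of_one_le hx (by linarith)
  | succ j ih =>
    have hβj : β * (β ^ j * (β * x - 1)) = β ^ (j + 1) * (β * x - 1) := by ring
    have h₀ : 0 ≤ β * (β ^ j * (β * x - 1)) := hβj ▸ mul_nonneg (by positivity) (by linarith)
    rw [Function.iterate_succ_apply', ih (by omega),
      tauβ_of_lt_one h₀ (hβj ▸ pow_mul_sub_one_lt_one hβ hx hn hj), hβj]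

lemma gdigit_zero_eq_one : gdigit β x 0 = 1 := by
  have := pow_mul_sub_one_lt_one hβ hx hn (Nat.zero_le n)
  rw [pow_zero, one_mul] at this
  exact Int.floor_eq_iff.2 ⟨by simpa using hx, by norm_num; linarith⟩

lemma gdigit_succ_eq_zero {j : ℕ} (hj : j < n) : gdigit β x (j + 1) = 0 := by
  rw [gdigit, iterate_tauβ_succ hβ hx hn hj.le, Int.floor_eq_zero_iff, ← mul_assoc, ← pow_succ']
  exact ⟨mul_nonneg (by positivity) (by linarith), pow_mul_sub_one_lt_one hβ hx hn hj⟩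

end Block

def periodicOneZeros (M : ℕ) : ℕ → ℤ := fun n => if n % (M + 1) = 0 then 1 else 0

lemma periodicOneZeros_add_period (M n : ℕ) :
    periodicOneZeros M (M + 1 + n) = periodicOneZeros M n := by
  simp [periodicOneZeros]

lemma periodicOneZeros_of_le {M j : ℕ} (hj : j ≤ M) :
    periodicOneZeros M j = if j = 0 then 1 else 0 := by
  simp [periodicOneZeros, Nat.mod_eq_of_lt (Nat.lt_succ_of_le hj)]

lemma iterate_shiftSeq_apply (u : ℕ → ℤ) (k n : ℕ) : shiftSeq^[k] u n = u (n + k) := by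
  induction k generalizing u with
  | zero => rfl
  | succ k ih => rw [Function.iterate_succ_apply, ih, shiftSeq, add_assoc]

lemma iterate_shiftSeq_periodicOneZeros (M : ℕ) :
    shiftSeq^[M + 1] (periodicOneZeros M) = periodicOneZeros M :=
  funext fun n => by rw [iterate_shiftSeq_apply, add_comm, periodicOneZeros_add_period]

-- The inverse branch of `τ_β^[M+1]` on the cylinder of sequences starting with `1 0^M`.
noncomputable def blockBranch (β : ℝ) (M : ℕ) (y : ℝ) : ℝ := (β ^ M + y) / β ^ (M + 1)

lemma pow_mul_blockBranch {M : ℕ} {β y : ℝ} (hβ : β ≠ 0) :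
    β ^ M * (β * blockBranch β M y - 1) = y := by
  rw [blockBranch]
  field_simp
  ring

section BlockBranch

variable {M : ℕ} {β y : ℝ} (hβ : 1 < β)
include hβ

lemma one_le_mul_blockBranch (hy : 0 ≤ y) : 1 ≤ β * blockBranch β M y := by
  have h := pow_mul_blockBranch (M := M) (y := y) (by positivity : β ≠ 0)
  by_contra! hlt
  nlinarith [pow_pos (by linarith : 0 < β) M]

lemma iterate_tauβ_blockBranch (hy : y ∈ Ico 0 1) :
    (tauβ β)^[M + 1] (blockBranch β M y) = y := by
  have hβ0 : β ≠ 0 := by positivity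
  rw [iterate_tauβ_succ hβ.le (one_le_mul_blockBranch hβ hy.1)
    (by rw [pow_mul_blockBranch hβ0]; exact hy.2) le_rfl, pow_mul_blockBranch hβ0]

lemma gdigit_blockBranch (hy : y ∈ Ico 0 1) {j : ℕ} (hj : j ≤ M) :
    gdigit β (blockBranch β M y) j = periodicOneZeros M j := by
  have hx := one_le_mul_blockBranch (M := M) hβ hy.1
  have hn : β ^ M * (β * blockBranch β M y - 1) < 1 := by
    rw [pow_mul_blockBranch (by positivity)]; exact hy.2
  rw [periodicOneZeros_of_le hj]
  rcases j with _ | i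
  · exact gdigit_zero_eq_one hβ.le hx hn
  · exact gdigit_succ_eq_zero hβ.le hx hn (by omega)

lemma not_isSimple_blockBranch (hy : y ∈ Ioo 0 1) (hns : ¬ isSimple β y) :
    ¬ isSimple β (blockBranch β M y) := by
  have hβ0 : β ≠ 0 := by positivity
  refine not_isSimple_of_iterate (n := M + 1)
    (by rwa [iterate_tauβ_blockBranch hβ (Ioo_subset_Ico_self hy)]) fun j hj h => ?_
  rcases j with _ | i
  · have := pow_mul_blockBranch (M := M) (y := y) hβ0
    rw [Function.iterate_zero_apply] at h
    rw [h, mul_one_div_cancel hβ0, sub_self, mul_zero] at this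
    exact hy.1.ne this
  · have := gdigit_blockBranch hβ (Ioo_subset_Ico_self hy) (show i + 1 ≤ M by omega)
    rw [gdigit_eq_one_of_iterate_eq hβ0 h, periodicOneZeros_of_le (by omega)] at this
    simp at this

end BlockBranch

def onesSpaced (M : ℕ) : Set (ℕ → ℤ) := {u | ∀ k j, j < M → u k = 1 → u (k + (j + 1)) = 0}

lemma isClosed_onesSpaced (M : ℕ) : IsClosed (onesSpaced M) := by
  simp only [onesSpaced, ofPred_forall]
  refine isClosed_iInter fun k => isClosed_iInter fun j => isClosed_iInter fun _ => ?_
  exact isClosed_imp ((isOpen_discrete {1}).preimage (continuous_apply k))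
    (isClosed_eq (continuous_apply _) continuous_const)

lemma apply_ne_one_of_mem_onesSpaced {M a b : ℕ} {u : ℕ → ℤ} (hu : u ∈ onesSpaced M)
    (hab : a < b) (hb : b ≤ a + M) (ha : u a = 1) : u b ≠ 1 := by
  have := hu a (b - a - 1) (by omega) ha
  rw [show a + (b - a - 1 + 1) = b by omega] at this
  rw [this]
  exact zero_ne_one

section Parry

variable {M : ℕ} {β y : ℝ} (hβ : 1 < β) (heq : β ^ (M + 1) = β ^ M + 1)
include hβ heq

omit hβ in
lemma pow_mul_sub_one_eq_one : β ^ M * (β - 1) = 1 := by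
  rw [mul_sub, mul_one, ← pow_succ, heq]; ring

lemma pow_mul_sub_one_lt_one_of_lt_one {z : ℝ} (hz : z < 1) : β ^ M * (β * z - 1) < 1 := by
  calc β ^ M * (β * z - 1) < β ^ M * (β - 1) := by gcongr; nlinarith
    _ = 1 := pow_mul_sub_one_eq_one heq

section One

variable {m : ℕ} (hm : M = m + 1)
include hm

lemma pow_mul_sub_one_lt_one_of_succ : β ^ m * (β * 1 - 1) < 1 := by
  calc β ^ m * (β * 1 - 1) < β ^ M * (β - 1) := by
        rw [mul_one, hm]
        exact mul_lt_mul_of_pos_right (pow_lt_pow_right₀ hβ m.lt_succ_self) (sub_pos.2 hβ)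
    _ = 1 := pow_mul_sub_one_eq_one heq

lemma iterate_tauβ_one : (tauβ β)^[M] 1 = 1 / β := by
  have hβ0 : β ≠ 0 := by positivity
  rw [hm, iterate_tauβ_succ hβ.le (by linarith) (pow_mul_sub_one_lt_one_of_succ hβ heq hm) le_rfl,
    eq_div_iff hβ0]
  have h := pow_mul_sub_one_eq_one heq
  rw [hm] at h
  linear_combination h

lemma iterate_tauβ_one_ne {j : ℕ} (hj : j < M) : (tauβ β)^[j] 1 ≠ 1 / β := by
  have hβ0 : β ≠ 0 := by positivity
  intro h
  rcases j with _ | i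
  · exact hβ.ne' (by simpa using h)
  · have := gdigit_succ_eq_zero hβ.le (by linarith) (pow_mul_sub_one_lt_one_of_succ hβ heq hm)
      (show i < m by omega)
    rw [gdigit_eq_one_of_iterate_eq hβ0 h] at this
    exact one_ne_zero this

lemma gdigit_one_of_lt {j : ℕ} (hj : j < M) : gdigit β 1 j = periodicOneZeros M j := by
  have hmul := pow_mul_sub_one_lt_one_of_succ hβ heq hm
  rw [periodicOneZeros_of_le hj.le]
  rcases j with _ | i
  · exact gdigit_zero_eq_one hβ.le (by linarith) hmul
  · exact gdigit_succ_eq_zero hβ.le (by linarith) hmul (by omega)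

end One

lemma qone_eq (hM : 1 ≤ M) : qone β = periodicOneZeros M := by
  obtain ⟨m, hm⟩ := Nat.exists_eq_add_of_le' hM
  have hsimple : ∃ n, (tauβ β)^[n] (1 : ℝ) = 1 / β := ⟨M, iterate_tauβ_one hβ heq hm⟩
  have hfind : Nat.find hsimple = M :=
    (Nat.find_eq_iff _).2 ⟨iterate_tauβ_one hβ heq hm, fun j hj => iterate_tauβ_one_ne hβ heq hm hj⟩
  funext n
  have hr : n % (M + 1) < M + 1 := Nat.mod_lt _ M.succ_pos
  rw [qone, dif_pos hsimple]
  simp only [hfind]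
  split_ifs with hlast
  · rw [gdigit_eq_one_of_iterate_eq (by positivity) (iterate_tauβ_one hβ heq hm)]
    simp only [periodicOneZeros, hlast, sub_self]
    omega
  · rw [gdigit_one_of_lt hβ heq hm (by omega), periodicOneZeros, periodicOneZeros, Nat.mod_mod]

lemma Xbeta_subset_onesSpaced (hM : 1 ≤ M) : Xbeta β ⊆ onesSpaced M := by
  obtain ⟨m, hm⟩ := Nat.exists_eq_add_of_le' hM
  refine closure_minimal ?_ (isClosed_onesSpaced M)
  rintro _ ⟨x, hx, hns, rfl⟩ k j hj hk
  obtain ⟨hz₀, hz₁⟩ := iterate_tauβ_mem_Icc (β := β) hx k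
  have hβz : 1 ≤ β * (tauβ β)^[k] x := by exact_mod_cast (Int.floor_eq_iff.1 hk).1
  have hz : (tauβ β)^[k] x < 1 := by
    refine hz₁.lt_of_ne fun h => hns ⟨M + k, ?_⟩
    rw [Function.iterate_add_apply, h, iterate_tauβ_one hβ heq hm]
  rw [gdigit_add]
  exact gdigit_succ_eq_zero hβ.le hβz (pow_mul_sub_one_lt_one_of_lt_one hβ heq hz) hj

lemma blockBranch_mem_Ioo (hy : y ∈ Ico 0 1) : blockBranch β M y ∈ Ioo 0 1 := by
  have hβM := pow_pos (by linarith : 0 < β) M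
  refine ⟨div_pos (by linarith [hy.1]) (by positivity), ?_⟩
  rw [blockBranch, div_lt_one (by positivity), heq]
  linarith [hy.2]

lemma exists_not_isSimple_gdigit_eq (N : ℕ) : ∃ x ∈ Ioo (0 : ℝ) 1, ¬ isSimple β x ∧
    ∀ i < (M + 1) * N, gdigit β x i = periodicOneZeros M i := by
  induction N with
  | zero =>
    obtain ⟨y, hy, hns⟩ := exists_not_isSimple (by positivity : β ≠ 0)
    exact ⟨y, hy, hns, by simp⟩
  | succ N ih =>
    obtain ⟨x, hx, hns, hdig⟩ := ih
    refine ⟨blockBranch β M x, blockBranch_mem_Ioo hβ heq (Ioo_subset_Ico_self hx),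
      not_isSimple_blockBranch hβ hx hns, fun i hi => ?_⟩
    rcases le_or_gt i M with hiM | hiM
    · exact gdigit_blockBranch hβ (Ioo_subset_Ico_self hx) hiM
    · obtain ⟨k, rfl⟩ : ∃ k, i = M + 1 + k := ⟨i - (M + 1), by omega⟩
      rw [gdigit_add, iterate_tauβ_blockBranch hβ (Ioo_subset_Ico_self hx),
        hdig k (by rw [mul_add_one] at hi; omega), periodicOneZeros_add_period]

lemma periodicOneZeros_mem_Xbeta : periodicOneZeros M ∈ Xbeta β := by
  choose x hx hns hdig using exists_not_isSimple_gdigit_eq (M := M) hβ heq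
  refine mem_closure_of_tendsto (f := fun N => gdigit β (x N)) (b := Filter.atTop)
    (tendsto_pi_nhds.2 fun i => tendsto_const_nhds.congr' ?_)
    (Filter.Eventually.of_forall fun N => ⟨x N, Ioo_subset_Icc_self (hx N), hns N, rfl⟩)
  filter_upwards [Filter.eventually_gt_atTop i] with N hN
  exact (hdig N i (by nlinarith)).symm

end Parry

lemma measurable_shiftSeq : Measurable shiftSeq :=
  measurable_pi_lambda _ fun n => measurable_pi_apply (n + 1)

lemma measurableSet_apply_eq (k : ℕ) (a : ℤ) : MeasurableSet {u : ℕ → ℤ | u k = a} :=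
  measurableSet_eq_fun (measurable_pi_apply k) measurable_const

lemma add_one_mul_measureReal_cylinder_one_le {M : ℕ} {μ : Measure (ℕ → ℤ)}
    [IsProbabilityMeasure μ] (hμ : MeasurePreserving shiftSeq μ μ) {X : Set (ℕ → ℤ)}
    (hXm : MeasurableSet X) (hX : μ X = 1) (hXs : X ⊆ onesSpaced M) :
    ((M : ℝ) + 1) * μ.real {u | u 0 = 1} ≤ 1 := by
  have hstat (k : ℕ) : μ.real {u : ℕ → ℤ | u k = 1} = μ.real {u | u 0 = 1} := by
    have : {u : ℕ → ℤ | u k = 1} = shiftSeq^[k] ⁻¹' {u | u 0 = 1} := by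
      ext u
      simp [iterate_shiftSeq_apply]
    rw [this, (hμ.iterate k).measureReal_preimage (measurableSet_apply_eq 0 1).nullMeasurableSet]
  have hconull : μ Xᶜ = 0 := by
    rw [measure_compl hXm (measure_ne_top μ X), hX, measure_univ, tsub_self]
  have hdisj : (Finset.range (M + 1) : Set ℕ).PairwiseDisjoint fun k => {u | u k = 1} ∩ X := by
    intro a ha b hb hab
    simp only [Finset.coe_range, mem_Iio] at ha hb
    refine Set.disjoint_left.2 fun u ⟨hua, huX⟩ ⟨hub, _⟩ => ?_
    rcases lt_or_gt_of_ne hab with h | h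
    · exact apply_ne_one_of_mem_onesSpaced (hXs huX) h (by omega) hua hub
    · exact apply_ne_one_of_mem_onesSpaced (hXs huX) h (by omega) hub hua
  calc ((M : ℝ) + 1) * μ.real {u | u 0 = 1}
      = ∑ k ∈ Finset.range (M + 1), μ.real ({u | u k = 1} ∩ X) := by
        simp only [measureReal_def, measure_inter_conull hconull]
        simp only [← measureReal_def, hstat, Finset.sum_const, Finset.card_range, nsmul_eq_mul,
          Nat.cast_add_one]
    _ = μ.real (⋃ k ∈ Finset.range (M + 1), {u | u k = 1} ∩ X) :=
        (measureReal_biUnion_finset hdisj fun k _ => (measurableSet_apply_eq k 1).inter hXm).symm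
    _ ≤ 1 := measureReal_le_one

section OrbitMeasure

variable {α : Type*} [MeasurableSpace α] {f : α → α} {x : α} {n : ℕ} {s : Set α}

noncomputable def orbitMeasure (f : α → α) (x : α) (n : ℕ) : Measure α :=
  (n : ℝ≥0∞)⁻¹ • ∑ k ∈ Finset.range n, Measure.dirac (f^[k] x)

lemma orbitMeasure_apply (hs : MeasurableSet s) :
    orbitMeasure f x n s = (n : ℝ≥0∞)⁻¹ * ∑ k ∈ Finset.range n, s.indicator 1 (f^[k] x) := by
  simp [orbitMeasure, Measure.dirac_apply' _ hs]

lemma orbitMeasure_eq_one (hn : n ≠ 0) (hs : MeasurableSet s) (hx : ∀ k < n, f^[k] x ∈ s) :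
    orbitMeasure f x n s = 1 := by
  rw [orbitMeasure_apply hs, Finset.sum_congr rfl fun k hk =>
    Set.indicator_of_mem (hx k (Finset.mem_range.1 hk)) 1]
  simp [ENNReal.inv_mul_cancel (Nat.cast_ne_zero.2 hn) (ENNReal.natCast_ne_top n)]

lemma isProbabilityMeasure_orbitMeasure (hn : n ≠ 0) : IsProbabilityMeasure (orbitMeasure f x n) :=
  ⟨orbitMeasure_eq_one hn MeasurableSet.univ fun _ _ => mem_univ _⟩

lemma map_orbitMeasure (hf : Measurable f) (hx : f^[n] x = x) :
    (orbitMeasure f x n).map f = orbitMeasure f x n := by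
  ext s hs
  rw [Measure.map_apply hf hs, orbitMeasure_apply (hf hs), orbitMeasure_apply hs]
  have hpre (y : α) : (f ⁻¹' s).indicator 1 y = s.indicator (1 : α → ℝ≥0∞) (f y) := rfl
  congr 1
  cases n with
  | zero => rfl
  | succ m =>
    simp only [hpre, ← Function.iterate_succ_apply' f]
    rw [Finset.sum_range_succ, Finset.sum_range_succ', hx, Function.iterate_zero_apply]

end OrbitMeasure

lemma orbitMeasure_periodicOneZeros_cylinder_one (M : ℕ) :
    orbitMeasure shiftSeq (periodicOneZeros M) (M + 1) {u | u 0 = 1} = ((M : ℝ≥0∞) + 1)⁻¹ := by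
  rw [orbitMeasure_apply (measurableSet_apply_eq 0 1), Finset.sum_eq_single 0]
  · simp [periodicOneZeros]
  · intro k hk hk0
    refine Set.indicator_of_notMem ?_ _
    simp [iterate_shiftSeq_apply, periodicOneZeros_of_le (Nat.lt_succ_iff.1 (Finset.mem_range.1 hk)),
      hk0]
  · simp

lemma cbeta_eq {M : ℕ} {β : ℝ} (hM : 1 ≤ M) (hβ : 1 < β) (heq : β ^ (M + 1) = β ^ M + 1) :
    cbeta β = 1 / ((M : ℝ) + 1) := by
  have hXm : MeasurableSet (Xbeta β) := isClosed_closure.measurableSet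
  have horbit (k : ℕ) : shiftSeq^[k] (periodicOneZeros M) ∈ Xbeta β :=
    mapsTo_shiftSeq_Xbeta.iterate k (periodicOneZeros_mem_Xbeta hβ heq)
  refine IsGreatest.csSup_eq ⟨⟨orbitMeasure shiftSeq (periodicOneZeros M) (M + 1),
    isProbabilityMeasure_orbitMeasure M.succ_ne_zero,
    orbitMeasure_eq_one M.succ_ne_zero hXm fun k _ => horbit k,
    map_orbitMeasure measurable_shiftSeq (iterate_shiftSeq_periodicOneZeros M), ?_⟩, ?_⟩
  · rw [orbitMeasure_periodicOneZeros_cylinder_one, ENNReal.toReal_inv, one_div]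
    norm_cast
  · rintro _ ⟨μ, _, hX, hinv, rfl⟩
    have := add_one_mul_measureReal_cylinder_one_le ⟨measurable_shiftSeq, hinv⟩ hXm hX
      (Xbeta_subset_onesSpaced hβ heq hM)
    rw [le_div_iff₀ (by positivity), mul_comm]
    exact this

/-- **Parry numbers with `β^{M+1} = β^M + 1`.**  If `β > 1` satisfies `β^{M+1} = β^M + 1`,
then the quasi-greedy expansion of `1` is `(1 0^M)^∞` and `c_β = 1/(M+1)`. -/
theorem cbeta_pearl (M : ℕ) (hM : 1 ≤ M) (β : ℝ) (hβ : 1 < β)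
    (heq : β ^ (M + 1) = β ^ M + 1) :
    (∀ n : ℕ, qone β n = if n % (M + 1) = 0 then 1 else 0) ∧
      cbeta β = 1 / ((M : ℝ) + 1) :=
  ⟨congrFun (qone_eq hβ heq hM), cbeta_eq hM hβ heq⟩
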